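/- arXiv:2110.07034 — 3 statements merged into one kernel-verified Lean document; each statement's English description precedes it below -/
import Mathlib

section
/- Consider the block matrix H = [[0, J],[F, -γI]] where J, F are n×n complex matrices and γ ∈ ℂ. Then the characteristic polynomial of H satisfies ch_H(λ) = ± ∏_{i=1}^{n} (λ(λ+γ) - μ_i), where μ_1, …, μ_n are the eigenvalues of JF (with multiplicity). Consequently, the 2n eigenvalues of H can be grouped into n pairs such that the sum of each pair equals -γ. -/
open Polynomial Matrix

lemma eval_charpoly' {m : Type*} [Fintype m] [DecidableEq m]
    (M : Matrix m m ℂ) (x : ℂ) :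
    (M.charpoly).eval x = (x • (1 : Matrix m m ℂ) - M).det := by
  rw [Matrix.charpoly, ← Polynomial.coe_evalRingHom, RingHom.map_det]
  congr 1
  ext i j
  by_cases h : i = j
  · subst h; simp [charmatrix_apply_eq, Matrix.one_apply]
  · simp [charmatrix_apply_ne _ _ _ h, Matrix.one_apply, h]

lemma key_eval {n : ℕ} (J F : Matrix (Fin n) (Fin n) ℂ) (γ : ℂ)
    (μ : Fin n → ℂ)
    (hμ : (J * F).charpoly = ∏ i, (X - C (μ i))) (lam : ℂ) (hlam : lam + γ ≠ 0) :
    (Matrix.fromBlocks 0 J F (-(γ • 1)) : Matrix (Fin n ⊕ Fin n) (Fin n ⊕ Fin n) ℂ).charpoly.eval lam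
      = ∏ i, (lam * (lam + γ) - μ i) := by
  rw [eval_charpoly']
  have h1 : lam • (1 : Matrix (Fin n ⊕ Fin n) (Fin n ⊕ Fin n) ℂ)
      - fromBlocks 0 J F (-(γ • 1))
      = fromBlocks (lam • 1) (-J) (-F) ((lam + γ) • 1) := by
    rw [← fromBlocks_one, fromBlocks_smul]
    ext (i|i) (j|j) <;> simp [add_smul, Matrix.one_apply]
  rw [h1]
  have hu : IsUnit ((lam + γ) • (1 : Matrix (Fin n) (Fin n) ℂ)).det := by
    simp [hlam]
  haveI := (lam + γ) • (1 : Matrix (Fin n) (Fin n) ℂ) |>.invertibleOfIsUnitDet hu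
  rw [Matrix.det_fromBlocks₂₂]
  have hinv : (⅟((lam + γ) • (1 : Matrix (Fin n) (Fin n) ℂ))) = (lam + γ)⁻¹ • 1 := by
    apply invOf_eq_right_inv
    rw [smul_mul_smul_comm, one_mul]
    simp [mul_inv_cancel₀ hlam]
  rw [hinv]
  have h2 : lam • (1 : Matrix (Fin n) (Fin n) ℂ) - (-J) * ((lam + γ)⁻¹ • 1) * (-F)
      = (lam + γ)⁻¹ • ((lam * (lam + γ)) • 1 - J * F) := by
    have hs : (lam + γ)⁻¹ * (lam * (lam + γ)) = lam := by field_simp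
    rw [smul_sub, smul_smul, hs]
    congr 1
    simp [Matrix.mul_smul, Matrix.smul_mul]
  rw [h2, Matrix.det_smul, Matrix.det_smul, Matrix.det_one, mul_one]
  have h3 : ((lam * (lam + γ)) • (1 : Matrix (Fin n) (Fin n) ℂ) - J * F).det
      = ((J*F).charpoly).eval (lam * (lam + γ)) := (eval_charpoly' _ _).symm
  rw [h3, hμ]
  rw [← mul_assoc, ← mul_pow, mul_inv_cancel₀ hlam, one_pow, one_mul]
  simp [eval_prod]

/-- For `H = [[0, J],[F, -γI]]`, the characteristic polynomial satisfies
`ch_H(λ) = ± ∏ᵢ (λ(λ+γ) - μᵢ)` where `μᵢ` are the eigenvalues (with multiplicity) of `JF`;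
consequently the `2n` eigenvalues of `H` come in `n` pairs each summing to `-γ`. -/
theorem stmt_3 {n : ℕ} (J F : Matrix (Fin n) (Fin n) ℂ) (γ : ℂ)
    (μ : Fin n → ℂ)
    (hμ : (J * F).charpoly = ∏ i, (X - C (μ i))) :
    (∃ ε : ℂ, (ε = 1 ∨ ε = -1) ∧ ∀ lam : ℂ,
        (Matrix.fromBlocks 0 J F (-(γ • 1)) : Matrix (Fin n ⊕ Fin n) (Fin n ⊕ Fin n) ℂ).charpoly.eval lam
          = ε * ∏ i, (lam * (lam + γ) - μ i)) ∧
    (∃ a b : Fin n → ℂ, (∀ i, a i + b i = -γ) ∧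
        (Matrix.fromBlocks 0 J F (-(γ • 1)) : Matrix (Fin n ⊕ Fin n) (Fin n ⊕ Fin n) ℂ).charpoly
          = ∏ i, ((X - C (a i)) * (X - C (b i)))) := by
  -- polynomial identity
  have hpoly : (Matrix.fromBlocks 0 J F (-(γ • 1)) :
      Matrix (Fin n ⊕ Fin n) (Fin n ⊕ Fin n) ℂ).charpoly
      = ∏ i, (X * (X + C γ) - C (μ i)) := by
    set p := (Matrix.fromBlocks 0 J F (-(γ • 1)) :
      Matrix (Fin n ⊕ Fin n) (Fin n ⊕ Fin n) ℂ).charpoly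
    set q := ∏ i, (X * (X + C γ) - C (μ i)) with hq
    have hroots : ({-γ}ᶜ : Set ℂ) ⊆ {x | (p - q).IsRoot x} := by
      intro x hx
      have hxγ : x + γ ≠ 0 := by
        simp only [Set.mem_compl_iff, Set.mem_singleton_iff] at hx
        intro h; exact hx (by linear_combination h)
      have h1 : p.eval x = ∏ i, (x * (x + γ) - μ i) := key_eval J F γ μ hμ x hxγ
      have h2 : q.eval x = ∏ i, (x * (x + γ) - μ i) := by
        simp [hq, eval_prod]
      simp only [Polynomial.IsRoot, Set.mem_setOf_eq, eval_sub, h1, h2, sub_self]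
    have hinf : ({-γ}ᶜ : Set ℂ).Infinite :=
      (Set.finite_singleton _).infinite_compl
    have : p - q = 0 :=
      Polynomial.eq_zero_of_infinite_isRoot _ (hinf.mono hroots)
    exact sub_eq_zero.mp this
  refine ⟨⟨1, Or.inl rfl, fun lam => ?_⟩, ?_⟩
  · rw [hpoly, one_mul, eval_prod]
    simp
  · have hsq : ∀ i, ∃ s : ℂ, s ^ 2 = γ ^ 2 / 4 + μ i := fun i =>
      IsAlgClosed.exists_pow_nat_eq _ two_pos
    choose s hs using hsq
    refine ⟨fun i => -γ / 2 + s i, fun i => -γ / 2 - s i, fun i => by ring, ?_⟩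
    rw [hpoly]
    refine Finset.prod_congr rfl fun i _ => ?_
    have h1 : (-γ / 2 + s i) + (-γ / 2 - s i) = -γ := by ring
    have h2 : (-γ / 2 + s i) * (-γ / 2 - s i) = -μ i := by
      have := hs i
      ring_nf
      ring_nf at this
      linear_combination -this
    have hexp : (X - C (-γ / 2 + s i)) * (X - C (-γ / 2 - s i))
        = X ^ 2 - C ((-γ / 2 + s i) + (-γ / 2 - s i)) * X
          + C ((-γ / 2 + s i) * (-γ / 2 - s i)) := by
      simp only [C_add, C_mul, C_sub, C_neg]
      ring
    rw [hexp, h1, h2]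
    simp only [C_neg]
    ring
end

section
/- Let F(x) = ½ x^⊤ A x + x^⊤ b where A ∈ ℝ^{d×d} is symmetric positive definite with smallest eigenvalue ν and largest eigenvalue L, and let x* = -A⁻¹b be the unique minimizer. For the heavy-ball iteration x^{k+1} = x^k - γ∇F(x^k) + β(x^k - x^{k-1}) with step size γ ≤ 1/L and momentum β = (1 - √(γν))², the spectral radius of the iteration matrix acting on the pair (x^{k+1} - x*, x^k - x*) equals 1 - √(γν). -/
open Matrix

section HBhelpers

open ComplexOrder

variable {d : ℕ}

lemma hb_mem_spectrum_iff_det {K : Type*} [Field K] {n : Type*} [Fintype n] [DecidableEq n]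
    (M : Matrix n n K) (z : K) : z ∈ spectrum K M ↔ (z • (1 : Matrix n n K) - M).det = 0 := by
  rw [spectrum.mem_iff, Algebra.algebraMap_eq_smul_one, Matrix.isUnit_iff_isUnit_det,
    isUnit_iff_ne_zero, not_not]

lemma hb_quad_abs {s b : ℝ} (hb : 0 ≤ b) (hs : s ^ 2 ≤ 4 * b) {μ : ℂ}
    (h : μ ^ 2 - (s : ℂ) * μ + (b : ℂ) = 0) : ‖μ‖ = Real.sqrt b := by
  set z : ℂ := 2 * μ - s with hz
  have hz2 : z ^ 2 = ((s ^ 2 - 4 * b : ℝ) : ℂ) := by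
    push_cast
    linear_combination 4 * h
  have him : z.re * z.im = 0 := by
    have := congrArg Complex.im hz2
    simp [pow_two, Complex.mul_im] at this
    linarith
  have hre : z.re ^ 2 - z.im ^ 2 = s ^ 2 - 4 * b := by
    have := congrArg Complex.re hz2
    simpa [pow_two, Complex.mul_re] using this
  have hzre : z.re = 0 := by
    rcases mul_eq_zero.1 him with h1 | h2
    · exact h1
    · nlinarith [sq_nonneg z.re]
  have hμre : μ.re = s / 2 := by
    have := congrArg Complex.re hz
    simp [Complex.sub_re, Complex.mul_re] at this
    nlinarith [this]
  have hμim : z.im = 2 * μ.im := by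
    have := congrArg Complex.im hz
    simp [Complex.sub_im, Complex.mul_im] at this
    linarith [this]
  have hnorm : Complex.normSq μ = b := by
    rw [hzre] at hre
    have h5 : z.im ^ 2 = 4 * b - s ^ 2 := by nlinarith [hre]
    have h4 : z.im ^ 2 = 4 * μ.im ^ 2 := by rw [hμim]; ring
    rw [Complex.normSq_apply, hμre]
    nlinarith [h4, h5]
  rw [Complex.norm_def, hnorm]

lemma hb_detS_sq (d : ℕ) :
    ((fromBlocks 0 1 1 0 : Matrix (Fin d ⊕ Fin d) (Fin d ⊕ Fin d) ℂ)).det *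
      ((fromBlocks 0 1 1 0 : Matrix (Fin d ⊕ Fin d) (Fin d ⊕ Fin d) ℂ)).det = 1 := by
  rw [← det_mul, Matrix.fromBlocks_multiply]
  simp [Matrix.fromBlocks_one]

lemma hb_detT (M : Matrix (Fin d) (Fin d) ℂ) (β : ℂ) :
    ((fromBlocks M (-(β • 1)) 1 0 : Matrix (Fin d ⊕ Fin d) (Fin d ⊕ Fin d) ℂ)).det *
      ((fromBlocks 0 1 1 0 : Matrix (Fin d ⊕ Fin d) (Fin d ⊕ Fin d) ℂ)).det = (-β) ^ d := by
  rw [← det_mul, Matrix.fromBlocks_multiply]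
  simp only [Matrix.mul_zero, Matrix.mul_one, zero_add, add_zero,
    Matrix.zero_mul, Matrix.one_mul]
  rw [det_fromBlocks_zero₂₁]
  have h : (-(β • 1) : Matrix (Fin d) (Fin d) ℂ) = (-β) • 1 := by simp
  rw [h, Matrix.det_smul]
  simp [Fintype.card_fin]

lemma hb_det_identity (M : Matrix (Fin d) (Fin d) ℂ) (β μ : ℂ) (hμ : μ ≠ 0) :
    (μ • (1 : Matrix (Fin d ⊕ Fin d) (Fin d ⊕ Fin d) ℂ) - fromBlocks M (-(β • 1)) 1 0).det
      = ((μ ^ 2 + β) • (1 : Matrix (Fin d) (Fin d) ℂ) - μ • M).det := by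
  have h1 : (μ • (1 : Matrix (Fin d ⊕ Fin d) (Fin d ⊕ Fin d) ℂ) - fromBlocks M (-(β • 1)) 1 0)
      = fromBlocks (μ • 1 - M) (β • 1) (-1) (μ • 1) := by
    rw [← Matrix.fromBlocks_one, Matrix.fromBlocks_smul]
    ext i j
    rcases i with i | i <;> rcases j with j | j <;>
      simp [Matrix.fromBlocks, Matrix.sub_apply]
  rw [h1]
  have hdet : IsUnit (μ • (1 : Matrix (Fin d) (Fin d) ℂ)).det := by
    rw [Matrix.det_smul, det_one]
    simp [isUnit_iff_ne_zero, hμ]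
  have : Invertible (μ • (1 : Matrix (Fin d) (Fin d) ℂ)) :=
    Matrix.invertibleOfIsUnitDet _ hdet
  rw [det_fromBlocks₂₂]
  have hinv : ⅟(μ • (1 : Matrix (Fin d) (Fin d) ℂ)) = μ⁻¹ • 1 := by
    apply invOf_eq_right_inv
    rw [Matrix.smul_mul, Matrix.mul_smul, Matrix.one_mul, smul_smul, mul_inv_cancel₀ hμ, one_smul]
  rw [hinv]
  have h2 : (μ • 1 - M) - (β • 1) * (μ⁻¹ • 1) * (-1 : Matrix (Fin d) (Fin d) ℂ)
      = μ • 1 - M + (β * μ⁻¹) • 1 := by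
    simp only [Matrix.smul_mul, Matrix.mul_smul, Matrix.mul_one, Matrix.one_mul,
      Matrix.mul_neg, smul_smul, smul_neg, sub_neg_eq_add, mul_comm]
  have h3 : ((μ ^ 2 + β) • (1 : Matrix (Fin d) (Fin d) ℂ) - μ • M)
      = μ • (μ • 1 - M + (β * μ⁻¹) • 1) := by
    match_scalars <;> field_simp <;> ring
  rw [h2, h3, Matrix.det_smul, Matrix.det_smul, det_one]
  ring

lemma hb_map_sub_smul (A : Matrix (Fin d) (Fin d) ℝ) (x : ℝ) :
    (A - x • 1).map (fun t => (t : ℂ)) = A.map (fun t => (t : ℂ)) - (x : ℂ) • 1 := by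
  ext i j
  by_cases h : i = j <;>
    simp [Matrix.map_apply, Matrix.sub_apply, Matrix.smul_apply, Matrix.one_apply, h]

lemma hb_det_map (M : Matrix (Fin d) (Fin d) ℝ) :
    (M.map (fun t => (t : ℂ))).det = (M.det : ℂ) := by
  have := RingHom.map_det (algebraMap ℝ ℂ) M
  simpa [Complex.coe_algebraMap] using this.symm

lemma hb_real_eigen (A : Matrix (Fin d) (Fin d) ℝ) (hA : A.IsSymm) (z : ℂ)
    (hz : (A.map (fun t => (t : ℂ)) - z • 1).det = 0) :
    ∃ x : ℝ, (x : ℂ) = z ∧ (A - x • 1).det = 0 := by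
  set Aℂ := A.map (fun t => (t : ℂ)) with hAc
  have herm : Aℂᴴ = Aℂ := by
    ext i j
    have := congrFun (congrFun hA i) j
    simp only [Matrix.transpose_apply] at this
    simp [hAc, Matrix.conjTranspose_apply, Matrix.map_apply, ← this]
  obtain ⟨v, hv, hveq⟩ := (Matrix.exists_mulVec_eq_zero_iff).2 hz
  have heig : Aℂ *ᵥ v = z • v := by
    have h1 : (Aℂ - z • 1) *ᵥ v = Aℂ *ᵥ v - (z • 1) *ᵥ v := Matrix.sub_mulVec _ _ _
    rw [h1] at hveq
    rw [Matrix.smul_mulVec, Matrix.one_mulVec] at hveq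
    linear_combination (norm := module) hveq
  have hp : (star v ⬝ᵥ v) ≠ 0 := fun h => hv (dotProduct_star_self_eq_zero.1 h)
  have h₁ : star v ⬝ᵥ (Aℂ *ᵥ v) = z * (star v ⬝ᵥ v) := by
    rw [heig, dotProduct_smul, smul_eq_mul]
  have h₂ : star v ⬝ᵥ (Aℂ *ᵥ v) = star z * (star v ⬝ᵥ v) := by
    rw [Matrix.dotProduct_mulVec]
    have : star v ᵥ* Aℂ = star (z • v) := by
      have h3 := Matrix.star_mulVec Aℂᴴ v
      rw [Matrix.conjTranspose_conjTranspose, herm, heig] at h3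
      exact h3.symm
    rw [this, star_smul, smul_dotProduct, smul_eq_mul]
  have hzz : star z = z := by
    have := h₁.symm.trans h₂
    exact (mul_right_cancel₀ hp this).symm
  have hre : ((z.re : ℂ)) = z := Complex.conj_eq_iff_re.1 hzz
  refine ⟨z.re, hre, ?_⟩
  have : ((A - z.re • 1).det : ℂ) = 0 := by
    rw [← hb_det_map, hb_map_sub_smul, hre, hz]
  exact_mod_cast this

end HBhelpers

set_option maxHeartbeats 1000000 in
/-- Optimal-momentum convergence rate of Polyak's heavy-ball method on a strictly convex
quadratic `F(x) = ½xᵀAx + xᵀb`: with step size `γ ≤ 1/L` and momentum `β = (1-√(γν))²`,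
the spectral radius of the heavy-ball iteration matrix
`T = [[(1+β)I - γA, -βI],[I, 0]]` equals `1 - √(γν)`, i.e. every eigenvalue of `T` has
modulus at most `1 - √(γν)` and some eigenvalue attains it; hence
`‖x^{k+1} - x*‖ ≤ (1-√(γν))‖x^k - x*‖` in an appropriate norm. -/
theorem stmt_9 {d : ℕ} (hd : 0 < d) (A : Matrix (Fin d) (Fin d) ℝ) (b : Fin d → ℝ)
    (hA : A.IsSymm) (hpd : A.PosDef) (ν L : ℝ)
    (hν : ν ∈ spectrum ℝ A) (hL : L ∈ spectrum ℝ A)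
    (hbounds : ∀ μ ∈ spectrum ℝ A, ν ≤ μ ∧ μ ≤ L)
    (γ β : ℝ) (hγ : 0 < γ) (hγL : γ ≤ 1 / L)
    (hβ : β = (1 - Real.sqrt (γ * ν)) ^ 2) :
    (∀ μ ∈ spectrum ℂ
        (Matrix.fromBlocks ((1 + β) • 1 - γ • A.map (fun x => (x : ℂ))) (-(β • 1)) 1 0 :
          Matrix (Fin d ⊕ Fin d) (Fin d ⊕ Fin d) ℂ),
      ‖μ‖ ≤ 1 - Real.sqrt (γ * ν)) ∧
    (∃ μ ∈ spectrum ℂ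
        (Matrix.fromBlocks ((1 + β) • 1 - γ • A.map (fun x => (x : ℂ))) (-(β • 1)) 1 0 :
          Matrix (Fin d ⊕ Fin d) (Fin d ⊕ Fin d) ℂ),
      ‖μ‖ = 1 - Real.sqrt (γ * ν)) := by
  -- positivity of the extreme eigenvalues
  have hν_pos : 0 < ν := by
    rw [hb_mem_spectrum_iff_det] at hν
    obtain ⟨v, hv, hveq⟩ := (Matrix.exists_mulVec_eq_zero_iff).2 hν
    have heig : A *ᵥ v = ν • v := by
      rw [Matrix.sub_mulVec, Matrix.smul_mulVec, Matrix.one_mulVec] at hveq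
      linear_combination (norm := module) -hveq
    have hpos := (Matrix.posDef_iff_dotProduct_mulVec.mp hpd).2 hv
    rw [heig, dotProduct_smul, smul_eq_mul] at hpos
    have hvv : (0:ℝ) < star v ⬝ᵥ v := by
      rcases lt_or_eq_of_le (dotProduct_star_self_nonneg v) with h | h
      · exact h
      · exact absurd (dotProduct_star_self_eq_zero.1 h.symm) hv
    by_contra hcon
    push_neg at hcon
    nlinarith [hpos, hvv]
  have hνL : ν ≤ L := (hbounds ν hν).2
  have hL_pos : 0 < L := lt_of_lt_of_le hν_pos hνL
  have hγL1 : γ * L ≤ 1 := by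
    rw [le_div_iff₀ hL_pos] at hγL
    linarith
  have hγν_nonneg : 0 ≤ γ * ν := le_of_lt (mul_pos hγ hν_pos)
  have hγν1 : γ * ν ≤ 1 := le_trans (by nlinarith) hγL1
  set a := Real.sqrt (γ * ν) with haa
  have ha2 : a ^ 2 = γ * ν := Real.sq_sqrt hγν_nonneg
  have ha0 : 0 ≤ a := Real.sqrt_nonneg _
  have ha1 : a ≤ 1 := by
    rw [haa, show (1:ℝ) = Real.sqrt 1 by simp]
    exact Real.sqrt_le_sqrt hγν1
  have hb0 : 0 ≤ β := hβ ▸ sq_nonneg _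
  have hsqβ : Real.sqrt β = 1 - a := by
    rw [hβ]; exact Real.sqrt_sq (by linarith)
  set Aℂ := A.map (fun x => (x : ℂ)) with hAC
  -- rewrite the block matrix with complex scalars
  set Mc : Matrix (Fin d) (Fin d) ℂ := ((1 + β : ℝ) : ℂ) • 1 - ((γ : ℝ) : ℂ) • Aℂ with hMc
  have hblocks : (Matrix.fromBlocks ((1 + β) • 1 - γ • Aℂ) (-(β • 1)) 1 0 :
        Matrix (Fin d ⊕ Fin d) (Fin d ⊕ Fin d) ℂ)
      = fromBlocks Mc (-(((β : ℝ) : ℂ) • 1)) 1 0 := by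
    ext i j
    rcases i with i | i <;> rcases j with j | j <;>
      simp [hMc, Matrix.fromBlocks, Matrix.sub_apply, Matrix.smul_apply, Complex.real_smul]
  -- generic bound for the discriminant
  have hdisc : ∀ x : ℝ, ν ≤ x → x ≤ L → (1 + β - γ * x) ^ 2 ≤ 4 * β := by
    intro x hx1 hx2
    have h1 : γ * ν ≤ γ * x := by nlinarith
    have h2 : γ * x ≤ γ * L := by nlinarith
    have hl : 0 ≤ γ * x - a ^ 2 := by rw [ha2]; linarith
    have hr : 0 ≤ (2 - a) ^ 2 - γ * x := by nlinarith
    rw [hβ]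
    nlinarith [mul_nonneg hl hr]
  constructor
  · -- all eigenvalues have modulus ≤ 1 - a
    intro μ hμ
    rw [hblocks, hb_mem_spectrum_iff_det] at hμ
    by_cases h0 : μ = 0
    · -- then β = 0 and a = 1
      subst h0
      rw [zero_smul, zero_sub, Matrix.det_neg] at hμ
      have hT : ((fromBlocks Mc (-(((β : ℝ) : ℂ) • 1)) 1 0 :
          Matrix (Fin d ⊕ Fin d) (Fin d ⊕ Fin d) ℂ)).det = 0 := by
        rcases mul_eq_zero.1 hμ with h | h
        · exact absurd h (pow_ne_zero _ (by norm_num))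
        · exact h
      have hdt := hb_detT Mc ((β : ℝ) : ℂ)
      rw [hT, zero_mul] at hdt
      have hβ0 : β = 0 := by
        have : ((-(β : ℂ)) ^ d) = 0 := hdt.symm
        have hb' : (-(β : ℂ)) = 0 := pow_eq_zero_iff hd.ne' |>.1 this
        have : (β : ℂ) = 0 := by linear_combination -hb'
        exact_mod_cast this
      have ha1' : a = 1 := by
        have : (1 - a) ^ 2 = 0 := by rw [← hβ, hβ0]
        have := pow_eq_zero_iff (two_ne_zero) |>.1 this
        linarith
      simp [ha1']
    · -- μ ≠ 0 : reduce to the quadratic equation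
      rw [hb_det_identity _ _ _ h0] at hμ
      have hγc : ((γ : ℝ) : ℂ) ≠ 0 := by
        exact_mod_cast hγ.ne'
      have hμγ : μ * ((γ : ℝ) : ℂ) ≠ 0 := mul_ne_zero h0 hγc
      obtain ⟨z, hz⟩ : ∃ z : ℂ,
          (μ * ((γ : ℝ) : ℂ)) * z = μ * (1 + (β : ℂ)) - μ ^ 2 - (β : ℂ) :=
        ⟨(μ * (1 + (β : ℂ)) - μ ^ 2 - (β : ℂ)) / (μ * ((γ : ℝ) : ℂ)), by field_simp⟩
      have hmat : ((μ ^ 2 + ((β : ℝ) : ℂ)) • (1 : Matrix (Fin d) (Fin d) ℂ) - μ • Mc)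
          = (μ * ((γ : ℝ) : ℂ)) • (Aℂ - z • 1) := by
        rw [hMc]
        match_scalars
        · push_cast
          linear_combination hz
        · push_cast
          ring
      rw [hmat, Matrix.det_smul] at hμ
      have hdz : (Aℂ - z • 1).det = 0 := by
        rcases mul_eq_zero.1 hμ with h | h
        · exact absurd h (pow_ne_zero _ hμγ)
        · exact h
      obtain ⟨x, hxz, hxdet⟩ := hb_real_eigen A hA z hdz
      have hxspec : x ∈ spectrum ℝ A := by
        rw [hb_mem_spectrum_iff_det]
        have hneg : (x • 1 - A : Matrix (Fin d) (Fin d) ℝ) = -(A - x • 1) := by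
          rw [neg_sub]
        rw [hneg, Matrix.det_neg, hxdet, mul_zero]
      obtain ⟨hx1, hx2⟩ := hbounds x hxspec
      have hquad : μ ^ 2 - ((1 + β - γ * x : ℝ) : ℂ) * μ + ((β : ℝ) : ℂ) = 0 := by
        rw [← hxz] at hz
        push_cast
        push_cast at hz
        linear_combination hz
      have habs := hb_quad_abs hb0 (hdisc x hx1 hx2) hquad
      rw [habs, hsqβ]
  · -- existence of an eigenvalue with modulus 1 - a
    obtain ⟨s₀, hs₀def⟩ : ∃ s : ℝ, s = 1 + β - γ * ν := ⟨_, rfl⟩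
    have hs₀ : s₀ ^ 2 ≤ 4 * β := by rw [hs₀def]; exact hdisc ν le_rfl hνL
    obtain ⟨r, hrdef⟩ : ∃ t : ℝ, t = Real.sqrt (4 * β - s₀ ^ 2) := ⟨_, rfl⟩
    have hr2 : r ^ 2 = 4 * β - s₀ ^ 2 := by
      rw [hrdef]; exact Real.sq_sqrt (by linarith)
    obtain ⟨μ₀, hμ₀def⟩ : ∃ m : ℂ, m = ((s₀ / 2 : ℝ) : ℂ) + ((r / 2 : ℝ) : ℂ) * Complex.I :=
      ⟨_, rfl⟩
    have habs : ‖μ₀‖ = 1 - a := by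
      rw [hμ₀def, Complex.norm_def, Complex.normSq_add_mul_I]
      have hval : (s₀ / 2) ^ 2 + (r / 2) ^ 2 = β := by nlinarith [hr2]
      rw [hval, hsqβ]
    have hquad0 : μ₀ ^ 2 + ((β : ℝ) : ℂ) = ((s₀ : ℝ) : ℂ) * μ₀ := by
      have hr2' : (((r : ℝ)) : ℂ) ^ 2 = 4 * (β : ℂ) - ((s₀ : ℝ) : ℂ) ^ 2 := by
        exact_mod_cast congrArg (fun t : ℝ => (t : ℂ)) hr2
      rw [hμ₀def]
      push_cast
      push_cast at hr2'
      linear_combination (-1/4 : ℂ) * hr2' + (((r : ℝ) : ℂ) ^ 2 / 4) * Complex.I_sq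
    refine ⟨μ₀, ?_, habs⟩
    rw [hblocks, hb_mem_spectrum_iff_det]
    by_cases h0 : μ₀ = 0
    · -- degenerate case : β = 0
      have ha1' : a = 1 := by
        rw [h0] at habs
        simp at habs
        linarith
      have hβ0 : β = 0 := by
        rw [hβ, ha1']
        ring
      rw [h0, zero_smul, zero_sub, Matrix.det_neg]
      have hdt := hb_detT Mc ((β : ℝ) : ℂ)
      rw [hβ0] at hdt
      simp only [Complex.ofReal_zero, neg_zero, zero_pow hd.ne'] at hdt
      have hS := hb_detS_sq d
      have hT0 : ((fromBlocks Mc (-(((0:ℝ) : ℂ) • 1)) 1 0 :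
          Matrix (Fin d ⊕ Fin d) (Fin d ⊕ Fin d) ℂ)).det = 0 := by
        rcases mul_eq_zero.1 hdt with h | h
        · exact h
        · rw [h, mul_zero] at hS
          exact absurd hS.symm one_ne_zero
      rw [show ((β : ℝ) : ℂ) = ((0:ℝ) : ℂ) by rw [hβ0]]
      rw [hT0, mul_zero]
    · rw [hb_det_identity _ _ _ h0]
      have hmat : ((μ₀ ^ 2 + ((β : ℝ) : ℂ)) • (1 : Matrix (Fin d) (Fin d) ℂ) - μ₀ • Mc)
          = (μ₀ * ((γ : ℝ) : ℂ)) • (Aℂ - ((ν : ℝ) : ℂ) • 1) := by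
        rw [hMc]
        have hq : μ₀ ^ 2 + (β : ℂ) = ((1 : ℂ) + β - γ * ν) * μ₀ := by
          have h' := hquad0
          rw [hs₀def] at h'
          push_cast at h' ⊢
          linear_combination h'
        match_scalars
        · push_cast
          push_cast at hq
          linear_combination hq
        · push_cast
          ring
      rw [hmat, Matrix.det_smul]
      have hdetν : (Aℂ - ((ν : ℝ) : ℂ) • 1).det = 0 := by
        rw [hAC, ← hb_map_sub_smul, hb_det_map]
        rw [hb_mem_spectrum_iff_det] at hν
        have hneg : (A - ν • 1 : Matrix (Fin d) (Fin d) ℝ) = -(ν • 1 - A) := by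
          rw [neg_sub]
        rw [hneg, Matrix.det_neg, hν, mul_zero]
        norm_cast
      rw [hdetν, mul_zero]
end

section
/- Let a_h, a_m : [t₀,T] → ℝ^{1×N} satisfy the first-order HBNODE adjoint system a_h'(t) = -a_m(t) B(t), a_m'(t) = -a_h(t) + γ a_m(t), with B(t) = ∂f/∂h(h(t),t). Define ã_m(t) = a_m'(t). Then a_m and ã_m satisfy the first-order heavy-ball system a_m'(t) = ã_m(t), ã_m'(t) = a_m(t) B(t) + γ ã_m(t), and moreover a_h(t) = γ a_m(t) - ã_m(t) for all t. -/
open Matrix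

/-- From the first-order HBNODE adjoint system `a_h' = -a_m B(t)`, `a_m' = -a_h + γ a_m`,
the pair `(a_m, ã_m)` with `ã_m := a_m' = γ a_m - a_h` satisfies the first-order heavy-ball
system `a_m' = ã_m`, `ã_m' = a_m B(t) + γ ã_m`, and `a_h = γ a_m - ã_m`. -/
theorem stmt_15 {N : ℕ} (γ : ℝ) (B : ℝ → Matrix (Fin N) (Fin N) ℝ) (hB : Continuous B)
    (a_h a_m : ℝ → (Fin N → ℝ))
    (hah : ∀ t, HasDerivAt a_h (-(Matrix.vecMul (a_m t) (B t))) t)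
    (ham : ∀ t, HasDerivAt a_m (-(a_h t) + γ • a_m t) t) :
    (∀ t, HasDerivAt a_m (γ • a_m t - a_h t) t) ∧
    (∀ t, HasDerivAt (fun t => γ • a_m t - a_h t)
      (Matrix.vecMul (a_m t) (B t) + γ • (γ • a_m t - a_h t)) t) ∧
    (∀ t, a_h t = γ • a_m t - (γ • a_m t - a_h t)) := by
  refine ⟨fun t => ?_, fun t => ?_, fun t => by abel⟩
  · have := ham t
    convert this using 1
    abel
  · have h : HasDerivAt (fun t => γ • a_m t - a_h t) _ t := ((ham t).const_smul γ).sub (hah t)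
    convert h using 1
    module
end
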